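/- For every κ > 0 and every δ > 0 there exists a positive constant C₂ depending only on κ and δ such that for all α ≥ δ and all β > 0 one has ∫_{[0,∞)} x^κ m_{α,β}(dx) ≥ C₂ α^κ/β^κ. -/

import Mathlib

open MeasureTheory Filter Set
open scoped ENNReal

/-- The modified Bessel function of the first kind of order one,
`I₁(r) = (r/2) Σ_{k=0}^∞ (r²/4)^k / (k!(k+1)!)`. -/
noncomputable def besselI1 (r : ℝ) : ℝ :=
  r / 2 * ∑' k : ℕ, (r ^ 2 / 4) ^ k / ((Nat.factorial k : ℝ) * (Nat.factorial (k + 1) : ℝ))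

/-- The Bessel distribution `m_{α,β}` on `[0,∞)`:
`m_{α,β}(dx) = e^{−α} δ₀(dx) + β e^{−α−βx} √(α/(βx)) I₁(2√(αβx)) dx`. -/
noncomputable def besselMeasure (α β : ℝ) : Measure ℝ :=
  ENNReal.ofReal (Real.exp (-α)) • Measure.dirac (0 : ℝ) +
    MeasureTheory.volume.withDensity fun x =>
      ENNReal.ofReal (Set.indicator (Set.Ioi (0 : ℝ))
        (fun x => β * Real.exp (-α - β * x) * Real.sqrt (α / (β * x)) *
          besselI1 (2 * Real.sqrt (α * β * x))) x)

open scoped Nat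

/-! The measure `m_{α,β}` is the Poisson(α)-mixture of the Gamma(k, β) laws, `k ≥ 0`, so its integer
moments are explicit: it is a probability measure with mean `α/β` and second moment
`(α² + 2α)/β²`. The Paley–Zygmund inequality then gives `m_{α,β}(α/(2β), ∞) ≥ α/(4(α + 2))`,
which is at least `δ/(4(δ + 2))` for `α ≥ δ`, and Markov's inequality turns this into
`∫ x^κ dm_{α,β} ≥ (α/(2β))^κ δ/(4(δ + 2))`. -/

theorem sq_setLIntegral_le_lintegral_sq_mul {Ω : Type*} [MeasurableSpace Ω] (μ : Measure Ω)
    {f : Ω → ℝ≥0∞} (hf : AEMeasurable f μ) (A : Set Ω) :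
    (∫⁻ x in A, f x ∂μ) ^ 2 ≤ (∫⁻ x, f x ^ 2 ∂μ) * μ A := by
  have cs := ENNReal.lintegral_mul_le_Lp_mul_Lq (μ.restrict A) Real.HolderConjugate.two_two
    hf.restrict aemeasurable_const (g := fun _ => 1)
  simp only [Pi.mul_apply, mul_one, ENNReal.rpow_two, one_pow, lintegral_one,
    Measure.restrict_apply_univ] at cs
  calc (∫⁻ x in A, f x ∂μ) ^ 2
      ≤ ((∫⁻ x in A, f x ^ 2 ∂μ) ^ (1 / 2 : ℝ) * μ A ^ (1 / 2 : ℝ)) ^ 2 := by gcongr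
    _ = (∫⁻ x in A, f x ^ 2 ∂μ) * μ A := by
      rw [mul_pow, ← ENNReal.rpow_natCast, ← ENNReal.rpow_natCast (μ A ^ _), ← ENNReal.rpow_mul,
        ← ENNReal.rpow_mul]
      norm_num
    _ ≤ (∫⁻ x, f x ^ 2 ∂μ) * μ A := by gcongr; exact Measure.restrict_le_self

theorem sq_mul_lintegral_le_lintegral_sq_mul_measure_lt {Ω : Type*} [MeasurableSpace Ω]
    (μ : Measure Ω) [IsProbabilityMeasure μ] {f : Ω → ℝ≥0∞} (hf : Measurable f)
    (hfi : ∫⁻ x, f x ∂μ ≠ ∞) (θ : ℝ≥0∞) :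
    ((1 - θ) * ∫⁻ x, f x ∂μ) ^ 2 ≤
      (∫⁻ x, f x ^ 2 ∂μ) * μ {x | θ * ∫⁻ x, f x ∂μ < f x} := by
  set s := ∫⁻ x, f x ∂μ
  set A := {x | θ * s < f x}
  have hA : MeasurableSet A := measurableSet_lt measurable_const hf
  have small : ∫⁻ x in Aᶜ, f x ∂μ ≤ θ * s :=
    calc ∫⁻ x in Aᶜ, f x ∂μ ≤ ∫⁻ _ in Aᶜ, θ * s ∂μ :=
          setLIntegral_mono measurable_const fun x hx => not_lt.1 hx
      _ = θ * s * μ Aᶜ := setLIntegral_const _ _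
      _ ≤ θ * s := mul_le_of_le_one_right' prob_le_one
  have large : (1 - θ) * s ≤ ∫⁻ x in A, f x ∂μ := by
    rw [ENNReal.sub_mul fun _ _ => hfi, one_mul, tsub_le_iff_left]
    calc s = ∫⁻ x in A, f x ∂μ + ∫⁻ x in Aᶜ, f x ∂μ := (lintegral_add_compl f hA).symm
      _ ≤ θ * s + ∫⁻ x in A, f x ∂μ := by rw [add_comm]; gcongr
  calc ((1 - θ) * s) ^ 2 ≤ (∫⁻ x in A, f x ∂μ) ^ 2 := by gcongr
    _ ≤ (∫⁻ x, f x ^ 2 ∂μ) * μ A := sq_setLIntegral_le_lintegral_sq_mul μ hf.aemeasurable A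

theorem ofReal_rpow_mul_measure_lt_le_lintegral (μ : Measure ℝ) {κ t : ℝ} (hκ : 0 ≤ κ)
    (ht : 0 ≤ t) :
    ENNReal.ofReal (t ^ κ) * μ {x | t < x} ≤ ∫⁻ x, ENNReal.ofReal (x ^ κ) ∂μ :=
  calc ENNReal.ofReal (t ^ κ) * μ {x | t < x}
      ≤ ENNReal.ofReal (t ^ κ) * μ {x | ENNReal.ofReal (t ^ κ) ≤ ENNReal.ofReal (x ^ κ)} := by
        refine mul_le_mul_right (measure_mono fun x hx => ?_) _
        exact ENNReal.ofReal_le_ofReal (Real.rpow_le_rpow ht (le_of_lt hx) hκ)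
    _ ≤ ∫⁻ x, ENNReal.ofReal (x ^ κ) ∂μ := mul_meas_ge_le_lintegral₀ (by fun_prop) _

theorem hasSum_pow_div_factorial_exp (x : ℝ) :
    HasSum (fun n : ℕ => x ^ n / n !) (Real.exp x) := by
  rw [Real.exp_eq_exp_ℝ]
  exact NormedSpace.expSeries_div_hasSum_exp x

theorem hasSum_mul_pow_div_factorial_exp (x : ℝ) :
    HasSum (fun n : ℕ => n * x ^ n / n !) (x * Real.exp x) := by
  rw [← hasSum_nat_add_iff' 1]
  simpa using ((hasSum_pow_div_factorial_exp x).mul_left x).congr_fun fun n => by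
    push_cast [Nat.factorial_succ]
    field_simp
    ring

theorem summable_pow_div_factorial_mul_factorial_succ (y : ℝ) :
    Summable fun k : ℕ => y ^ k / ((k ! : ℝ) * ((k + 1)! : ℝ)) := by
  refine Summable.of_norm_bounded (Real.summable_pow_div_factorial |y|) fun k => ?_
  rw [norm_div, norm_pow, Real.norm_eq_abs, Real.norm_eq_abs,
    abs_of_pos (by positivity : (0 : ℝ) < k ! * (k + 1)!)]
  gcongr
  exact le_mul_of_one_le_right (by positivity) (Nat.one_le_cast.mpr (k + 1).factorial_pos)

theorem lintegral_Ioi_ofReal_pow_mul_exp_neg_mul {β : ℝ} (hβ : 0 < β) (n : ℕ) :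
    ∫⁻ x in Ioi 0, ENNReal.ofReal (x ^ n * Real.exp (-(β * x))) =
      ENNReal.ofReal (n ! / β ^ (n + 1)) := by
  have hval : ∫ x in Ioi 0, x ^ n * Real.exp (-(β * x)) = n ! / β ^ (n + 1) := by
    have h := Real.integral_rpow_mul_exp_neg_mul_Ioi (a := n + 1) (by positivity) hβ
    rw [add_sub_cancel_right, Real.Gamma_nat_eq_factorial, ← Nat.cast_add_one,
      Real.rpow_natCast, div_pow, one_pow] at h
    simp_rw [Real.rpow_natCast] at h
    rw [h, one_div_mul_eq_div]
  rw [← hval, ← ofReal_integral_eq_lintegral_ofReal]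
  · exact Integrable.of_integral_ne_zero (by rw [hval]; positivity)
  · filter_upwards [self_mem_ae_restrict measurableSet_Ioi] with x (hx : 0 < x)
    positivity

theorem lintegral_ofReal_pow_withDensity_pow_mul_exp_neg_mul {β c : ℝ} (hβ : 0 < β) (hc : 0 ≤ c)
    (k j : ℕ) :
    ∫⁻ x, ENNReal.ofReal (x ^ j) ∂volume.withDensity
        ((Ioi 0).indicator fun x => ENNReal.ofReal (c * (x ^ k * Real.exp (-(β * x))))) =
      ENNReal.ofReal (c * (k + j)! / β ^ (k + j + 1)) := by
  rw [withDensity_indicator measurableSet_Ioi,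
    lintegral_withDensity_eq_lintegral_mul _ (by fun_prop) (by fun_prop)]
  calc ∫⁻ x in Ioi 0,
        ENNReal.ofReal (c * (x ^ k * Real.exp (-(β * x)))) * ENNReal.ofReal (x ^ j)
      = ∫⁻ x in Ioi 0, ENNReal.ofReal c *
          ENNReal.ofReal (x ^ (k + j) * Real.exp (-(β * x))) := by
        refine setLIntegral_congr_fun measurableSet_Ioi fun x (hx : 0 < x) => ?_
        rw [← ENNReal.ofReal_mul hc, ← ENNReal.ofReal_mul (by positivity), pow_add]
        ring_nf
    _ = ENNReal.ofReal (c * (k + j)! / β ^ (k + j + 1)) := by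
        rw [lintegral_const_mul _ (by fun_prop), lintegral_Ioi_ofReal_pow_mul_exp_neg_mul hβ,
          ← ENNReal.ofReal_mul hc, mul_div_assoc]

theorem besselI1_two_mul_sqrt {y : ℝ} (hy : 0 ≤ y) :
    besselI1 (2 * √y) = √y * ∑' k : ℕ, y ^ k / ((k ! : ℝ) * ((k + 1)! : ℝ)) := by
  rw [besselI1, mul_pow, Real.sq_sqrt hy]
  ring_nf

noncomputable def besselDensity (α β x : ℝ) : ℝ :=
  β * Real.exp (-α - β * x) * √(α / (β * x)) * besselI1 (2 * √(α * β * x))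

theorem besselMeasure_eq (α β : ℝ) :
    besselMeasure α β = ENNReal.ofReal (Real.exp (-α)) • Measure.dirac 0 +
      volume.withDensity fun x => ENNReal.ofReal ((Ioi 0).indicator (besselDensity α β) x) :=
  rfl

/-- The `k`-th term is `e^{-α} α^{k+1}/(k+1)!` times the Gamma(`k + 1`, `β`) density. -/
theorem hasSum_besselDensity {α β x : ℝ} (hα : 0 ≤ α) (hβ : 0 < β) (hx : 0 < x) :
    HasSum (fun k : ℕ => Real.exp (-α) * (α * β) ^ (k + 1) / (k ! * (k + 1)!) *
      (x ^ k * Real.exp (-(β * x)))) (besselDensity α β x) := by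
  have hroot : √(α / (β * x)) * √(α * β * x) = α := by
    rw [← Real.sqrt_mul (by positivity), show α / (β * x) * (α * β * x) = α ^ 2 by field_simp,
      Real.sqrt_sq hα]
  have hdens : besselDensity α β x = α * β * Real.exp (-α) * Real.exp (-(β * x)) *
      ∑' k : ℕ, (α * β * x) ^ k / ((k ! : ℝ) * ((k + 1)! : ℝ)) := by
    rw [besselDensity, besselI1_two_mul_sqrt (by positivity),
      show -α - β * x = -α + -(β * x) by ring, Real.exp_add]
    linear_combination (β * Real.exp (-α) * Real.exp (-(β * x)) *
      ∑' k : ℕ, (α * β * x) ^ k / ((k ! : ℝ) * ((k + 1)! : ℝ))) * hroot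
  rw [hdens]
  exact ((summable_pow_div_factorial_mul_factorial_succ (α * β * x)).hasSum.mul_left
    (α * β * Real.exp (-α) * Real.exp (-(β * x)))).congr_fun fun k => by ring

theorem lintegral_ofReal_pow_besselMeasure {α β s : ℝ} (hα : 0 ≤ α) (hβ : 0 < β) (j : ℕ)
    (hs : HasSum (fun k : ℕ => α ^ (k + 1) * (k + j)! / (k ! * (k + 1)!)) s) :
    ∫⁻ x, ENNReal.ofReal (x ^ j) ∂besselMeasure α β =
      ENNReal.ofReal (Real.exp (-α) * (0 ^ j + s / β ^ j)) := by
  set c : ℕ → ℝ := fun k => Real.exp (-α) * (α * β) ^ (k + 1) / (k ! * (k + 1)!)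
  have hdens : (fun x => ENNReal.ofReal ((Ioi 0).indicator (besselDensity α β) x)) = ∑' k,
      (Ioi 0).indicator fun x => ENNReal.ofReal (c k * (x ^ k * Real.exp (-(β * x)))) := by
    funext x
    rw [ENNReal.tsum_apply]
    by_cases hx : 0 < x
    · have h := hasSum_besselDensity hα hβ hx
      simp only [indicator_of_mem (show x ∈ Ioi 0 from hx)]
      rw [← h.tsum_eq, ENNReal.ofReal_tsum_of_nonneg (fun k => by positivity) h.summable]
    · simp [indicator_of_notMem (show x ∉ Ioi 0 from hx)]
  have hsum : ∑' k, ENNReal.ofReal (c k * (k + j)! / β ^ (k + j + 1)) =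
      ENNReal.ofReal (Real.exp (-α) / β ^ j * s) := by
    have h := hs.mul_left (Real.exp (-α) / β ^ j)
    rw [← h.tsum_eq, ENNReal.ofReal_tsum_of_nonneg (fun k => by positivity) h.summable]
    refine tsum_congr fun k => congrArg ENNReal.ofReal ?_
    simp only [c]
    field_simp
    ring
  rw [besselMeasure_eq, lintegral_add_measure, lintegral_smul_measure, lintegral_dirac, hdens,
    withDensity_tsum fun k => (by fun_prop : Measurable _).indicator measurableSet_Ioi,
    lintegral_sum_measure]
  simp_rw [lintegral_ofReal_pow_withDensity_pow_mul_exp_neg_mul hβ (by positivity : 0 ≤ c _)]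
  rw [hsum, smul_eq_mul, ← ENNReal.ofReal_mul (Real.exp_nonneg _), ← ENNReal.ofReal_add
    (by positivity) (mul_nonneg (by positivity) (hs.nonneg fun k => by positivity))]
  congr 1
  ring

theorem besselMeasure_univ {α β : ℝ} (hα : 0 ≤ α) (hβ : 0 < β) :
    besselMeasure α β univ = 1 := by
  have hs : HasSum (fun k : ℕ => α ^ (k + 1) * (k + 0)! / (k ! * (k + 1)!))
      (Real.exp α - 1) := by
    have h := (hasSum_nat_add_iff' 1).mpr (hasSum_pow_div_factorial_exp α)
    simp only [Finset.sum_range_one, pow_zero, Nat.factorial_zero, Nat.cast_one, div_one] at h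
    exact h.congr_fun fun k => by rw [add_zero]; field_simp
  have h := lintegral_ofReal_pow_besselMeasure hα hβ 0 hs
  simp only [pow_zero, ENNReal.ofReal_one, lintegral_one, div_one] at h
  rw [h, add_sub_cancel, ← Real.exp_add, neg_add_cancel, Real.exp_zero, ENNReal.ofReal_one]

theorem lintegral_ofReal_besselMeasure {α β : ℝ} (hα : 0 ≤ α) (hβ : 0 < β) :
    ∫⁻ x, ENNReal.ofReal x ∂besselMeasure α β = ENNReal.ofReal (α / β) := by
  have hs : HasSum (fun k : ℕ => α ^ (k + 1) * (k + 1)! / (k ! * (k + 1)!)) (α * Real.exp α) :=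
    ((hasSum_pow_div_factorial_exp α).mul_left α).congr_fun fun k => by field_simp; ring
  have h := lintegral_ofReal_pow_besselMeasure hα hβ 1 hs
  simp only [pow_one] at h
  rw [h, zero_add, Real.exp_neg]
  congr 1
  field_simp

theorem lintegral_ofReal_sq_besselMeasure {α β : ℝ} (hα : 0 ≤ α) (hβ : 0 < β) :
    ∫⁻ x, ENNReal.ofReal (x ^ 2) ∂besselMeasure α β =
      ENNReal.ofReal ((α ^ 2 + 2 * α) / β ^ 2) := by
  have hs : HasSum (fun k : ℕ => α ^ (k + 1) * (k + 2)! / (k ! * (k + 1)!))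
      ((α ^ 2 + 2 * α) * Real.exp α) := by
    have h := ((hasSum_mul_pow_div_factorial_exp α).mul_left α).add
      ((hasSum_pow_div_factorial_exp α).mul_left (2 * α))
    rw [show (α ^ 2 + 2 * α) * Real.exp α = α * (α * Real.exp α) + 2 * α * Real.exp α by ring]
    refine h.congr_fun fun k => ?_
    push_cast [Nat.factorial_succ]
    field_simp
    ring
  have h := lintegral_ofReal_pow_besselMeasure hα hβ 2 hs
  rw [h, zero_pow two_ne_zero, zero_add, Real.exp_neg]
  congr 1
  field_simp

theorem besselMeasure_tail_ge {α β : ℝ} (hα : 0 < α) (hβ : 0 < β) :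
    ENNReal.ofReal (α / (4 * (α + 2))) ≤ besselMeasure α β {x | α / (2 * β) < x} := by
  have : IsProbabilityMeasure (besselMeasure α β) := ⟨besselMeasure_univ hα.le hβ⟩
  have hmean := lintegral_ofReal_besselMeasure hα.le hβ
  have hpz := sq_mul_lintegral_le_lintegral_sq_mul_measure_lt (besselMeasure α β)
    ENNReal.measurable_ofReal (hmean ▸ ENNReal.ofReal_ne_top) 2⁻¹
  have hhalf : (2⁻¹ : ℝ≥0∞) * ENNReal.ofReal (α / β) = ENNReal.ofReal (α / (2 * β)) := by
    rw [← ENNReal.ofReal_ofNat 2, ← ENNReal.ofReal_inv_of_pos two_pos,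
      ← ENNReal.ofReal_mul (by norm_num)]
    congr 1
    field_simp
  have hset :
      {x : ℝ | ENNReal.ofReal (α / (2 * β)) < ENNReal.ofReal x} = {x | α / (2 * β) < x} := by
    ext x
    exact ENNReal.ofReal_lt_ofReal_iff'.trans
      ⟨fun h => h.1, fun h => ⟨h, (by positivity : 0 ≤ α / (2 * β)).trans_lt h⟩⟩
  have hsq : ∫⁻ x, ENNReal.ofReal x ^ 2 ∂besselMeasure α β ≤
      ENNReal.ofReal ((α ^ 2 + 2 * α) / β ^ 2) := by
    rw [← lintegral_ofReal_sq_besselMeasure hα.le hβ]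
    refine lintegral_mono fun x => ?_
    rcases le_total 0 x with hx | hx
    · rw [ENNReal.ofReal_pow hx]
    · simp [ENNReal.ofReal_of_nonpos hx]
  rw [hmean, ENNReal.one_sub_inv_two, hhalf, hset] at hpz
  calc ENNReal.ofReal (α / (4 * (α + 2)))
      = ENNReal.ofReal (α / (2 * β)) ^ 2 / ENNReal.ofReal ((α ^ 2 + 2 * α) / β ^ 2) := by
        rw [← ENNReal.ofReal_pow (by positivity), ← ENNReal.ofReal_div_of_pos (by positivity)]
        congr 1
        field_simp
        ring
    _ ≤ besselMeasure α β {x | α / (2 * β) < x} :=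
        ENNReal.div_le_of_le_mul' (hpz.trans (by gcongr))

theorem bessel_moment_lower_bound (κ δ : ℝ) (hκ : 0 < κ) (hδ : 0 < δ) :
    ∃ C₂ : ℝ, 0 < C₂ ∧ ∀ α β : ℝ, δ ≤ α → 0 < β →
      ENNReal.ofReal (C₂ * α ^ κ / β ^ κ) ≤
        ∫⁻ x, ENNReal.ofReal (x ^ κ) ∂ besselMeasure α β := by
  refine ⟨δ / (4 * (δ + 2)) / 2 ^ κ, by positivity, fun α β hδα hβ => ?_⟩
  have hα : 0 < α := hδ.trans_le hδα
  have hfrac : δ / (4 * (δ + 2)) ≤ α / (4 * (α + 2)) := by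
    rw [div_le_div_iff₀ (by positivity) (by positivity)]
    nlinarith
  calc ENNReal.ofReal (δ / (4 * (δ + 2)) / 2 ^ κ * α ^ κ / β ^ κ)
      ≤ ENNReal.ofReal ((α / (2 * β)) ^ κ) * ENNReal.ofReal (α / (4 * (α + 2))) := by
        rw [← ENNReal.ofReal_mul (by positivity)]
        refine ENNReal.ofReal_le_ofReal ?_
        rw [Real.div_rpow hα.le (by positivity), Real.mul_rpow zero_le_two hβ.le]
        calc δ / (4 * (δ + 2)) / 2 ^ κ * α ^ κ / β ^ κ
            = δ / (4 * (δ + 2)) * (α ^ κ / (2 ^ κ * β ^ κ)) := by ring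
          _ ≤ α / (4 * (α + 2)) * (α ^ κ / (2 ^ κ * β ^ κ)) := by gcongr
          _ = _ := by ring
    _ ≤ ENNReal.ofReal ((α / (2 * β)) ^ κ) * besselMeasure α β {x | α / (2 * β) < x} := by
        gcongr
        exact besselMeasure_tail_ge hα hβ
    _ ≤ ∫⁻ x, ENNReal.ofReal (x ^ κ) ∂besselMeasure α β :=
        ofReal_rpow_mul_measure_lt_le_lintegral _ hκ.le (by positivity)
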